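/- Let F and E be locally convex Hausdorff spaces and (fₙ) an equicontinuous Schauder basis of F with coefficient functionals (λₙ). Then the tensor product F ⊗ E, viewed as the finite-rank operators inside the ε-product F ε E, is sequentially dense in F ε E. -/

import Mathlib

open Filter Topology

/-- The collection of absolutely convex compact subsets of `F`. -/
def kappaSets (𝕜 F : Type*) [RCLike 𝕜] [AddCommGroup F] [Module 𝕜 F] [Module ℝ F]
    [UniformSpace F] : Set (Set F) :=
  {s : Set F | IsCompact s ∧ Balanced 𝕜 s ∧ Convex ℝ s}

/-- `F'_κ`: the dual of `F` with the topology of uniform convergence on absolutely convex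
compact subsets of `F`. -/
abbrev DualKappa (𝕜 F : Type*) [RCLike 𝕜] [AddCommGroup F] [Module 𝕜 F] [Module ℝ F]
    [UniformSpace F] [IsUniformAddGroup F] [ContinuousSMul 𝕜 F] :=
  UniformConvergenceCLM (RingHom.id 𝕜) 𝕜 (kappaSets 𝕜 F)

/-! The partial-sum operators `Pₖ = ∑_{n<k} λₙ(·) fₙ` are equicontinuous and converge pointwise to
the identity, hence (Ascoli) uniformly on compact sets. Their transposes `Pₖᵗ φ = φ ∘ Pₖ` therefore
converge to the identity of `F'_κ` uniformly on every equicontinuous `S ⊆ F'`, and composing with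
the uniformly continuous `u` gives `u ∘ Pₖᵗ → u` uniformly on `S`. Each `u ∘ Pₖᵗ` is the
finite-rank operator `∑_{n<k} fₙ ⊗ u(λₙ)`. -/

open Set Pointwise
open scoped UniformConvergenceCLM Uniformity

theorem Equicontinuous.tendstoUniformlyOn_of_tendsto {ι X α : Type*} [TopologicalSpace X]
    [UniformSpace α] {F : ι → X → α} {f : X → α} {l : Filter ι} (hF : Equicontinuous F)
    (hFf : ∀ x, Tendsto (F · x) l (𝓝 (f x))) {K : Set X} (hK : IsCompact K) :
    TendstoUniformlyOn F f l K := by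
  have hcover : ⋃₀ {s : Set X | IsCompact s} = univ :=
    eq_univ_of_forall fun x => ⟨{x}, isCompact_singleton, rfl⟩
  have hunif := (EquicontinuousOn.tendsto_uniformOnFun_iff_pi (fun _ hs => hs) hcover
    (fun s _ => hF.equicontinuousOn s) l f).mpr (tendsto_pi_nhds.mpr hFf)
  exact UniformOnFun.tendsto_iff_tendstoUniformlyOn.mp hunif K hK

theorem UniformConvergenceCLM.tendstoUniformlyOn_comp {𝕜 F G ι : Type*} [NormedField 𝕜]
    [AddCommGroup F] [Module 𝕜 F] [UniformSpace F] [IsUniformAddGroup F]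
    [AddCommGroup G] [Module 𝕜 G] [UniformSpace G] [IsUniformAddGroup G]
    {l : Filter ι} {𝔖 : Set (Set F)} (h𝔖₁ : 𝔖.Nonempty) (h𝔖₂ : DirectedOn (· ⊆ ·) 𝔖)
    {P : ι → F →L[𝕜] F} (hP : ∀ K ∈ 𝔖, TendstoUniformlyOn (fun i => ⇑(P i)) id l K)
    {S : Set (F →L[𝕜] G)} (hS : EquicontinuousAt (fun φ : S => (φ : F → G)) 0) :
    -- naming `α` and `β` puts the topology of uniform convergence on `𝔖` on the type copy
    TendstoUniformlyOn (α := F →Lᵤ[𝕜, 𝔖] G) (β := F →Lᵤ[𝕜, 𝔖] G)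
      (fun i φ => φ.comp (P i)) id l S := by
  refine (IsTopologicalAddGroup.tendstoUniformlyOn_iff _ _ _ _
    IsUniformAddGroup.rightUniformSpace_eq).mpr fun U hU => ?_
  obtain ⟨⟨K, T⟩, ⟨hK, hT⟩, hKT⟩ :=
    (UniformConvergenceCLM.hasBasis_nhds_zero _ _ 𝔖 h𝔖₁ h𝔖₂).mem_iff.mp hU
  have hTunif : {p : G × G | p.2 - p.1 ∈ T} ∈ 𝓤 G := by
    rw [uniformity_eq_comap_nhds_zero G]
    exact preimage_mem_comap hT
  obtain ⟨U₀, hU₀, hU₀T⟩ := eventually_iff_exists_mem.mp (hS _ hTunif)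
  have hclose : ∀ᶠ i in l, ∀ x ∈ K, P i x - x ∈ U₀ :=
    (IsTopologicalAddGroup.tendstoUniformlyOn_iff _ _ _ _
      IsUniformAddGroup.rightUniformSpace_eq).mp (hP K hK) U₀ hU₀
  filter_upwards [hclose] with i hi φ hφ
  refine hKT fun x hx => ?_
  have hφx := hU₀T _ (hi x hx) ⟨φ, hφ⟩
  simp only [mem_ofPred_eq, map_sub, map_zero, sub_zero] at hφx
  exact hφx

section KappaSets

variable {𝕜 F : Type*} [RCLike 𝕜] [AddCommGroup F] [Module 𝕜 F] [Module ℝ F] [UniformSpace F]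

theorem kappaSets_nonempty : (kappaSets 𝕜 F).Nonempty :=
  ⟨∅, isCompact_empty, balanced_empty, convex_empty⟩

theorem directedOn_kappaSets [ContinuousAdd F] : DirectedOn (· ⊆ ·) (kappaSets 𝕜 F) := by
  rintro K₁ hK₁ K₂ hK₂
  rcases K₁.eq_empty_or_nonempty with rfl | hne₁
  · exact ⟨K₂, hK₂, empty_subset _, subset_rfl⟩
  rcases K₂.eq_empty_or_nonempty with rfl | hne₂
  · exact ⟨K₁, hK₁, subset_rfl, empty_subset _⟩
  refine ⟨K₁ + K₂, ⟨hK₁.1.add hK₂.1, hK₁.2.1.add hK₂.2.1, hK₁.2.2.add hK₂.2.2⟩, ?_, ?_⟩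
  · exact fun x hx => ⟨x, hx, 0, hK₂.2.1.zero_mem hne₂, add_zero x⟩
  · exact fun x hx => ⟨0, hK₁.2.1.zero_mem hne₁, x, hx, zero_add x⟩

theorem mapsTo_image_kappaSets {G : Type*} [AddCommGroup G] [Module 𝕜 G] [Module ℝ G]
    [UniformSpace G] [IsScalarTower ℝ 𝕜 F] [IsScalarTower ℝ 𝕜 G] (L : F →L[𝕜] G) :
    MapsTo (L '' ·) (kappaSets 𝕜 F) (kappaSets 𝕜 G) := by
  rintro K ⟨hcompact, hbalanced, hconvex⟩
  refine ⟨hcompact.image L.continuous, fun a ha => ?_, ?_⟩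
  · rw [← image_smul_set]
    exact image_mono (hbalanced a ha)
  · exact hconvex.linear_image ((L : F →ₗ[𝕜] G).restrictScalars ℝ)

end KappaSets

theorem stmt3_general {𝕜 F E : Type*} [RCLike 𝕜]
    [AddCommGroup F] [Module 𝕜 F] [UniformSpace F] [IsUniformAddGroup F]
    [ContinuousSMul 𝕜 F] [Module ℝ F] [IsScalarTower ℝ 𝕜 F]
    [AddCommGroup E] [Module 𝕜 E] [UniformSpace E] [IsUniformAddGroup E]
    (f : ℕ → F) (lam : ℕ → F →L[𝕜] 𝕜)
    (hrepr : ∀ x : F,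
      Tendsto (fun k => ∑ n ∈ Finset.range k, lam n x • f n) atTop (𝓝 x))
    (hequi : Equicontinuous
      (fun k : ℕ => fun x : F => ∑ n ∈ Finset.range k, lam n x • f n)) :
    ∀ u : DualKappa 𝕜 F →L[𝕜] E, ∃ v : ℕ → (DualKappa 𝕜 F →L[𝕜] E),
      -- each `v k` has finite rank, i.e. belongs to `F ⊗ E`:
      (∀ k, ∃ (m : ℕ) (g : Fin m → F) (e : Fin m → E),
        ∀ f' : F →L[𝕜] 𝕜, v k f' = ∑ i, f' (g i) • e i) ∧
      -- and `v k → u` in `F ε E`: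
      (∀ S : Set (F →L[𝕜] 𝕜), Equicontinuous (fun φ : S => (φ.1 : F → 𝕜)) →
        TendstoUniformlyOn (fun k (f' : F →L[𝕜] 𝕜) => v k f')
          (fun f' : F →L[𝕜] 𝕜 => u f') atTop S) := by
  intro u
  let P : ℕ → F →L[𝕜] F := fun k => ∑ n ∈ Finset.range k, (lam n).smulRight (f n)
  have hP : ∀ k x, P k x = ∑ n ∈ Finset.range k, lam n x • f n := by simp [P]
  let v : ℕ → DualKappa 𝕜 F →L[𝕜] E := fun k =>
    u.comp <| ContinuousLinearMap.precompUniformConvergenceCLM 𝕜 _ _ (P k)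
      (mapsTo_image_kappaSets (P k))
  refine ⟨v, fun k => ⟨k, fun i => f i, fun i => u (lam i), fun f' => ?_⟩, fun S hS => ?_⟩
  · have htranspose : f'.comp (P k) = ∑ n ∈ Finset.range k, f' (f n) • lam n := by
      ext x
      simp [hP, mul_comm]
    let ι := ContinuousLinearMap.toUniformConvergenceCLM (RingHom.id 𝕜) 𝕜 (kappaSets 𝕜 F)
    calc v k f' = u (ι (f'.comp (P k))) := rfl
      _ = ∑ n ∈ Finset.range k, f' (f n) • u (ι (lam n)) := by
        simp only [htranspose, map_sum, map_smul]
      _ = _ := Finset.sum_range fun n => f' (f n) • u (lam n)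
  · have hPK : ∀ K ∈ kappaSets 𝕜 F, TendstoUniformlyOn (fun k => ⇑(P k)) id atTop K := by
      intro K hK
      have hsums := hequi.tendstoUniformlyOn_of_tendsto hrepr hK.1
      simp only [← hP] at hsums
      exact hsums
    exact u.uniformContinuous.comp_tendstoUniformlyOn
      (UniformConvergenceCLM.tendstoUniformlyOn_comp kappaSets_nonempty directedOn_kappaSets
        hPK (hS 0))

/-- If `F` has an equicontinuous Schauder basis `(fₙ)` with coefficient
functionals `(λₙ)`, then the finite-rank operators (i.e. `F ⊗ E`) are sequentially dense in
the ε-product `F ε E = L(F'_κ, E)`: every `u ∈ F ε E` is the limit of a sequence of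
finite-rank elements, convergence being uniform on every equicontinuous subset of `F'`. -/
theorem stmt3 {𝕜 F E : Type*} [RCLike 𝕜]
    [AddCommGroup F] [Module 𝕜 F] [UniformSpace F] [IsUniformAddGroup F]
    [ContinuousSMul 𝕜 F] [T2Space F] [Module ℝ F] [IsScalarTower ℝ 𝕜 F]
    [LocallyConvexSpace ℝ F]
    [AddCommGroup E] [Module 𝕜 E] [UniformSpace E] [IsUniformAddGroup E]
    [ContinuousSMul 𝕜 E] [T2Space E] [Module ℝ E] [IsScalarTower ℝ 𝕜 E]
    [LocallyConvexSpace ℝ E]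
    (f : ℕ → F) (lam : ℕ → F →L[𝕜] 𝕜)
    (hrepr : ∀ x : F,
      Tendsto (fun k => ∑ n ∈ Finset.range k, lam n x • f n) atTop (𝓝 x))
    (huniq : ∀ (x : F) (c : ℕ → 𝕜),
      Tendsto (fun k => ∑ n ∈ Finset.range k, c n • f n) atTop (𝓝 x) →
        c = fun n => lam n x)
    (hequi : Equicontinuous
      (fun k : ℕ => fun x : F => ∑ n ∈ Finset.range k, lam n x • f n)) :
    ∀ u : DualKappa 𝕜 F →L[𝕜] E, ∃ v : ℕ → (DualKappa 𝕜 F →L[𝕜] E),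
      -- each `v k` has finite rank, i.e. belongs to `F ⊗ E`:
      (∀ k, ∃ (m : ℕ) (g : Fin m → F) (e : Fin m → E),
        ∀ f' : F →L[𝕜] 𝕜, v k f' = ∑ i, f' (g i) • e i) ∧
      -- and `v k → u` in `F ε E`:
      (∀ S : Set (F →L[𝕜] 𝕜), Equicontinuous (fun φ : S => (φ.1 : F → 𝕜)) →
        TendstoUniformlyOn (fun k (f' : F →L[𝕜] 𝕜) => v k f')
          (fun f' : F →L[𝕜] 𝕜 => u f') atTop S) :=
  stmt3_general f lam hrepr hequi
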